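/- Let η ∈ ℕ^6 satisfy SNec(η). Then there exists (r₀,s₀) ∈ Δ₃ such that η·α(r₀,s₀) = 2π. -/
import Mathlib


open scoped BigOperators

noncomputable section

/-- The Euclidean plane. -/
abbrev Plane := EuclideanSpace ℝ (Fin 2)

/-- A circle in the plane: a center together with a positive radius. -/
structure Circle2 where
  center : Plane
  radius : ℝ
  radius_pos : 0 < radius

/-- Two circles are tangent if the distance between their centers is the sum of radii. -/
def Tangent (S T : Circle2) : Prop :=
  dist S.center T.center = S.radius + T.radius

/-- A packing: the open discs bounded by distinct circles are pairwise disjoint. -/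
def IsPacking (P : Set Circle2) : Prop :=
  ∀ S ∈ P, ∀ T ∈ P, S ≠ T →
    Disjoint (Metric.ball S.center S.radius) (Metric.ball T.center T.radius)

/-- A neighbor cycle of `S` in `P`: a family `A : ZMod n → Circle2` with `n ≥ 1`, consisting
of circles of `P`, each tangent to `S`, consecutive ones tangent, and exhausting all
neighbors of `S` in `P`. -/
def IsNeighborCycle (P : Set Circle2) (S : Circle2) {n : ℕ} (A : ZMod n → Circle2) : Prop :=
  1 ≤ n ∧ (∀ i, A i ∈ P) ∧ (∀ i, Tangent S (A i)) ∧
  (∀ i, Tangent (A i) (A (i + 1))) ∧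
  (∀ T ∈ P, Tangent S T → ∃ i, T = A i)

/-- A compact packing: a packing in which every circle has a neighbor cycle. -/
def IsCompactPacking (P : Set Circle2) : Prop :=
  IsPacking P ∧ ∀ S ∈ P, ∃ (n : ℕ) (A : ZMod n → Circle2), IsNeighborCycle P S A

/-- The set of radii of the circles of a packing. -/
def radii (P : Set Circle2) : Set ℝ := Circle2.radius '' P

/-- The six target unordered pairs (as multisets) of radii:
{1,1}, {r₀,r₀}, {s₀,s₀}, {1,r₀}, {1,s₀}, {r₀,s₀}. -/
def pairTargets (r₀ s₀ : ℝ) : Fin 6 → Multiset ℝ :=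
  ![{1, 1}, {r₀, r₀}, {s₀, s₀}, {1, r₀}, {1, s₀}, {r₀, s₀}]

/-- The angle-count of a neighbor cycle `A`: coordinate `k` counts the indices `i` for which
the unordered pair of radii of `A i` and `A (i+1)` is the `k`-th target pair. -/
def angleCount (r₀ s₀ : ℝ) {n : ℕ} (A : ZMod n → Circle2) : Fin 6 → ℕ :=
  fun k => Set.ncard {i : ZMod n |
    ({(A i).radius, (A (i + 1)).radius} : Multiset ℝ) = pairTargets r₀ s₀ k}

/-- Dot product of two tuples in ℕ^6. -/
def dotNN (ξ v : Fin 6 → ℕ) : ℕ := ∑ i, ξ i * v i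

/-- Dot product of a tuple in ℕ^6 with a vector in ℝ^6. -/
def dotNR (ξ : Fin 6 → ℕ) (v : Fin 6 → ℝ) : ℝ := ∑ i, (ξ i : ℝ) * v i

/-- The angle at the center of a circle of radius `a` formed by the centers of mutually
tangent circles of radii `b` and `c`. -/
def ang (a b c : ℝ) : ℝ :=
  Real.arccos (((a + b) ^ 2 + (a + c) ^ 2 - (b + c) ^ 2) / (2 * (a + c) * (a + b)))

/-- The vector α(r,s) ∈ ℝ^6. -/
def alphaVec (r s : ℝ) : Fin 6 → ℝ :=
  ![ang s 1 1, ang s r r, ang s s s, ang s 1 r, ang s 1 s, ang s r s]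

/-- The vector β(r,s) ∈ ℝ^6. -/
def betaVec (r s : ℝ) : Fin 6 → ℝ :=
  ![ang r 1 1, ang r r r, ang r s s, ang r 1 r, ang r 1 s, ang r r s]

/-- The vector γ(r,s) ∈ ℝ^6. -/
def gammaVec (r s : ℝ) : Fin 6 → ℝ :=
  ![ang 1 1 1, ang 1 r r, ang 1 s s, ang 1 1 r, ang 1 1 s, ang 1 r s]

/-- Δ₃ = {(r,s) : 0 < s < r < 1}. -/
def Delta3 : Set (ℝ × ℝ) := {p | 0 < p.2 ∧ p.2 < p.1 ∧ p.1 < 1}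

/-- Π₃ = pairs (r,s) with 0 < s < r < 1 admitting a compact packing with radii {s, r, 1}. -/
def Pi3 : Set (ℝ × ℝ) :=
  {p | 0 < p.2 ∧ p.2 < p.1 ∧ p.1 < 1 ∧
    ∃ P : Set Circle2, IsCompactPacking P ∧ radii P = {p.2, p.1, 1}}

/-- Standard basis vector of ℕ^6. -/
def eb (i : Fin 6) : Fin 6 → ℕ := fun j => if j = i then 1 else 0

/-- The symmetric map κ : Fin 3 → Fin 3 → ℕ^6 sending (0,0),(1,1),(2,2),(0,1),(0,2),(1,2)
to e₁,e₂,e₃,e₄,e₅,e₆ respectively. -/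
def kappa : Fin 3 → Fin 3 → (Fin 6 → ℕ) :=
  ![![eb 0, eb 3, eb 4], ![eb 3, eb 1, eb 5], ![eb 4, eb 5, eb 2]]

/-- Seq(η): η arises as the sum ∑_{j ∈ ZMod n} κ(σ(j), σ(j+1)) for some n ≥ 1 and σ. -/
def SeqCond (η : Fin 6 → ℕ) : Prop :=
  ∃ (n : ℕ) (σ : ZMod n → Fin 3), 1 ≤ n ∧
    η = ∑ᶠ j : ZMod n, kappa (σ j) (σ (j + 1))

/-- Mod2(η): three parity conditions. -/
def Mod2 (η : Fin 6 → ℕ) : Prop :=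
  Even (dotNN η ![2,0,0,1,1,0]) ∧ Even (dotNN η ![0,2,0,1,0,1]) ∧
    Even (dotNN η ![0,0,2,0,1,1])

/-- SNec(η). -/
def SNec (η : Fin 6 → ℕ) : Prop :=
  dotNN η ![1,1,1,1,1,1] < 6 ∧ 12 < dotNN η ![6,6,2,6,3,3] ∧
    dotNN η ![1,1,0,1,1,1] ≠ 0 ∧ SeqCond η ∧ Mod2 η

/-- RNec(ζ). -/
def RNec (ζ : Fin 6 → ℕ) : Prop :=
  dotNN ζ ![1,1,0,1,0,0] < 6 ∧ 12 < dotNN ζ ![6,2,2,3,3,2] ∧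
    dotNN ζ ![2,2,0,2,1,1] ≤ 12 ∧ dotNN ζ ![1,0,1,1,1,1] ≠ 0 ∧
    SeqCond ζ ∧ Mod2 ζ ∧
    (0 < dotNN ζ ![2,0,0,1,1,0] → dotNN ζ ![2,2,0,2,1,1] < 12)

/-- The set K ⊆ ℕ^6 × ℕ^6. -/
def Kset : Set ((Fin 6 → ℕ) × (Fin 6 → ℕ)) :=
  {p | SNec p.1 ∧ RNec p.2 ∧ p.2 2 < 35 ∧
    (dotNN p.1 ![1,0,0,1,1,0] ≠ 0 ∨ dotNN p.2 ![1,0,0,1,1,0] ≠ 0)}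


private lemma arccos_half' : Real.arccos (1/2) = Real.pi / 3 := by
  rw [show (1/2:ℝ) = Real.cos (Real.pi/3) from Real.cos_pi_div_three.symm]
  exact Real.arccos_cos (by positivity) (by linarith [Real.pi_pos])

private lemma vec6_five {α : Type*} (a b c d e f : α) : (![a,b,c,d,e,f]) 5 = f := rfl

private lemma key_eq (η : Fin 6 → ℕ) (r s : ℝ) (hs : 0 < s) (hr : s < r) :
    dotNR η (alphaVec r s) =
      (η 0 : ℝ) * Real.arccos (((s+1)^2+(s+1)^2-(1+1)^2)/(2*(s+1)*(s+1))) +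
      (η 1 : ℝ) * Real.arccos (((s+r)^2+(s+r)^2-(r+r)^2)/(2*(s+r)*(s+r))) +
      (η 2 : ℝ) * Real.arccos (1/2) +
      (η 3 : ℝ) * Real.arccos (((s+1)^2+(s+r)^2-(1+r)^2)/(2*(s+r)*(s+1))) +
      (η 4 : ℝ) * Real.arccos (s/(s+1)) +
      (η 5 : ℝ) * Real.arccos (s/(s+r)) := by
  have hs0 : s ≠ 0 := hs.ne'
  have hs1 : s + 1 ≠ 0 := by intro h; linarith
  have hsr : s + r ≠ 0 := by intro h; linarith
  have e2 : ang s s s = Real.arccos (1/2) := by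
    unfold ang; congr 1
    rw [div_eq_div_iff (by nlinarith) (by norm_num : (2:ℝ) ≠ 0)]; ring
  have e4 : ang s 1 s = Real.arccos (s/(s+1)) := by
    unfold ang; congr 1
    rw [div_eq_div_iff (by nlinarith) (by intro h; linarith : s + 1 ≠ 0)]; ring
  have e5 : ang s r s = Real.arccos (s/(s+r)) := by
    unfold ang; congr 1
    rw [div_eq_div_iff (by nlinarith) (by intro h; linarith : s + r ≠ 0)]; ring
  unfold dotNR alphaVec
  rw [Fin.sum_univ_six]
  simp only [Matrix.cons_val_zero, Matrix.cons_val_one, Matrix.head_cons,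
    Matrix.cons_val_two, Matrix.tail_cons, Matrix.cons_val_three,
    Matrix.cons_val_four, vec6_five]
  rw [e2, e4, e5]
  rfl

set_option maxHeartbeats 1000000 in
/-- If SNec(η), then the 2π-contour of (r,s) ↦ η·α(r,s) is non-empty. -/
theorem stmt_11 (η : Fin 6 → ℕ) (hη : SNec η) :
    ∃ p ∈ Delta3, dotNR η (alphaVec p.1 p.2) = 2 * Real.pi := by
  obtain ⟨hlt, hgt, -, -, -⟩ := hη
  have hgt' : (13:ℝ) ≤ 6*(η 0:ℝ) + 6*η 1 + 2*η 2 + 6*η 3 + 3*η 4 + 3*η 5 := by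
    have h : 13 ≤ η 0 * 6 + η 1 * 6 + η 2 * 2 + η 3 * 6 + η 4 * 3 + η 5 * 3 := by
      have := hgt
      simp only [dotNN, Fin.sum_univ_six, Matrix.cons_val_zero, Matrix.cons_val_one,
        Matrix.head_cons, Matrix.cons_val_two, Matrix.tail_cons, Matrix.cons_val_three,
        Matrix.cons_val_four, vec6_five] at this
      omega
    have h' : (13:ℝ) ≤ (η 0:ℝ)*6 + (η 1:ℝ)*6 + (η 2:ℝ)*2 + (η 3:ℝ)*6 + (η 4:ℝ)*3 + (η 5:ℝ)*3 := by
      exact_mod_cast h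
    linarith
  have hlt' : ((η 0:ℝ) + η 1 + η 2 + η 3 + η 4 + η 5) ≤ 5 := by
    have h : η 0 + η 1 + η 2 + η 3 + η 4 + η 5 ≤ 5 := by
      have := hlt
      simp only [dotNN, Fin.sum_univ_six, Matrix.cons_val_zero, Matrix.cons_val_one,
        Matrix.head_cons, Matrix.cons_val_two, Matrix.tail_cons, Matrix.cons_val_three,
        Matrix.cons_val_four, vec6_five] at this
      omega
    exact_mod_cast h
  set G : ℝ → ℝ := fun t =>
      (η 0 : ℝ) * Real.arccos (((t*(1+t)/2+1)^2+(t*(1+t)/2+1)^2-(1+1)^2)/(2*(t*(1+t)/2+1)*(t*(1+t)/2+1))) +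
      (η 1 : ℝ) * Real.arccos (((t*(1+t)/2+(1+t)/2)^2+(t*(1+t)/2+(1+t)/2)^2-((1+t)/2+(1+t)/2)^2)/(2*(t*(1+t)/2+(1+t)/2)*(t*(1+t)/2+(1+t)/2))) +
      (η 2 : ℝ) * Real.arccos (1/2) +
      (η 3 : ℝ) * Real.arccos (((t*(1+t)/2+1)^2+(t*(1+t)/2+(1+t)/2)^2-(1+(1+t)/2)^2)/(2*(t*(1+t)/2+(1+t)/2)*(t*(1+t)/2+1))) +
      (η 4 : ℝ) * Real.arccos ((t*(1+t)/2)/(t*(1+t)/2+1)) +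
      (η 5 : ℝ) * Real.arccos ((t*(1+t)/2)/(t*(1+t)/2+(1+t)/2)) with hGdef
  have hcont : ContinuousOn G (Set.Icc 0 1) := by
    rw [hGdef]
    have harccos : ∀ (f g : ℝ → ℝ), Continuous f → Continuous g →
        (∀ t ∈ Set.Icc (0:ℝ) 1, g t ≠ 0) →
        ContinuousOn (fun t => Real.arccos (f t / g t)) (Set.Icc 0 1) := by
      intro f g hf hg hne
      exact Real.continuous_arccos.comp_continuousOn
        ((hf.continuousOn).div (hg.continuousOn) hne)
    refine (((((ContinuousOn.mul continuousOn_const (harccos _ _ (by fun_prop) (by fun_prop) ?_)).add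
      (ContinuousOn.mul continuousOn_const (harccos _ _ (by fun_prop) (by fun_prop) ?_))).add
      continuousOn_const).add
      (ContinuousOn.mul continuousOn_const (harccos _ _ (by fun_prop) (by fun_prop) ?_))).add
      (ContinuousOn.mul continuousOn_const (harccos _ _ (by fun_prop) (by fun_prop) ?_))).add
      (ContinuousOn.mul continuousOn_const (harccos _ _ (by fun_prop) (by fun_prop) ?_))
    all_goals intro t ht h; obtain ⟨h0, h1⟩ := ht
    all_goals nlinarith [sq_nonneg (t*(1+t)), sq_nonneg (1+t), sq_nonneg t, sq_nonneg ((1+t)^2), mul_nonneg h0 (by linarith : (0:ℝ) ≤ 1+t)]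
  have hG0 : 2 * Real.pi < G 0 := by
    have h0 : G 0 = (η 0:ℝ) * Real.pi + (η 1:ℝ) * Real.pi + (η 2:ℝ) * (Real.pi/3) +
        (η 3:ℝ) * Real.pi + (η 4:ℝ) * (Real.pi/2) + (η 5:ℝ) * (Real.pi/2) := by
      rw [hGdef]
      norm_num [Real.arccos_neg_one, Real.arccos_zero, arccos_half']
    rw [h0]
    nlinarith [Real.pi_pos, hgt']
  have hG1 : G 1 < 2 * Real.pi := by
    have h1 : G 1 = ((η 0:ℝ) + η 1 + η 2 + η 3 + η 4 + η 5) * (Real.pi/3) := by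
      rw [hGdef]
      norm_num [Real.arccos_neg_one, Real.arccos_zero, arccos_half']
      ring
    rw [h1]
    nlinarith [Real.pi_pos, hlt']
  obtain ⟨t, ht, hGt⟩ := intermediate_value_Icc' (by norm_num : (0:ℝ) ≤ 1) hcont
    ⟨hG1.le, hG0.le⟩
  have ht0 : 0 < t := lt_of_le_of_ne ht.1 (by rintro rfl; rw [hGt] at hG0; linarith)
  have ht1 : t < 1 := lt_of_le_of_ne ht.2 (by rintro rfl; rw [hGt] at hG1; linarith)
  refine ⟨((1+t)/2, t*(1+t)/2), ⟨by nlinarith, by nlinarith, by linarith⟩, ?_⟩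
  rw [key_eq η ((1+t)/2) (t*(1+t)/2) (by nlinarith) (by nlinarith)]
  rw [← hGt, hGdef]


end
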